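/- arXiv:2404.03559 — 2 statements merged into one kernel-verified Lean document; each statement's English description precedes it below -/
import Mathlib

section
/- If x is a generic point for a Φ-invariant ergodic measure μ and ρ̃_FK(x,y) = 0, then y is also a generic point for μ. -/
open MeasureTheory Filter Set Topology
open scoped ENNReal symmDiff

section FK

structure IsFlow {X : Type*} [TopologicalSpace X] (Φ : ℝ → X → X) : Prop where
  cont : Continuous fun p : ℝ × X => Φ p.1 p.2
  map_zero : ∀ x, Φ 0 x = x
  map_add : ∀ t s x, Φ (t + s) x = Φ s (Φ t x)

variable {X : Type*} [MetricSpace X]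

/-- `x` and `y` are `(t,ε,δ)`-matchable: there are measurable `A, A' ⊆ [0,t]` of Lebesgue
measure `> (1-ε)t` and an increasing absolutely continuous onto map `h : A → A'`
(with a.e. derivative `h'`) with `|h' - 1| < ε` and `d(φ^s x, φ^{h s} y) < δ` on `A`. -/
def Matchable (Φ : ℝ → X → X) (x y : X) (t ε δ : ℝ) : Prop :=
  ∃ (A A' : Set ℝ) (h h' : ℝ → ℝ),
    MeasurableSet A ∧ MeasurableSet A' ∧
    A ⊆ Icc 0 t ∧ A' ⊆ Icc 0 t ∧
    ENNReal.ofReal ((1 - ε) * t) < volume A ∧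
    ENNReal.ofReal ((1 - ε) * t) < volume A' ∧
    MapsTo h A A' ∧ SurjOn h A A' ∧ StrictMonoOn h A ∧
    (∀ B ⊆ A, MeasurableSet B → volume (h '' B) = ENNReal.ofReal (∫ s in B, h' s)) ∧
    (∀ s ∈ A, |h' s - 1| < ε) ∧
    (∀ s ∈ A, dist (Φ s x) (Φ (h s) y) < δ)

/-- The `(t,δ)`-gap `f̃_{t,δ}(x,y)`; by convention it equals `1` when no matching exists. -/
noncomputable def fkGap (Φ : ℝ → X → X) (t δ : ℝ) (x y : X) : ℝ :=
  sInf ({ε : ℝ | 0 < ε ∧ Matchable Φ x y t ε δ} ∪ {1})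

/-- `f̃_δ(x,y) = limsup_{t → ∞} f̃_{t,δ}(x,y)`. -/
noncomputable def fkDist (Φ : ℝ → X → X) (δ : ℝ) (x y : X) : ℝ :=
  Filter.limsup (fun t => fkGap Φ t δ x y) Filter.atTop

/-- The Feldman–Katok pseudometric for flows. -/
noncomputable def rhoFK (Φ : ℝ → X → X) (x y : X) : ℝ :=
  sInf {δ : ℝ | 0 < δ ∧ fkDist Φ δ x y < δ}

/-- Discrete `(n,δ)`-matching of cardinality `k` for a map `T`. -/
def DMatching (T : X → X) (x y : X) (n : ℕ) (δ : ℝ) (k : ℕ) : Prop :=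
  ∃ (D D' : Finset ℕ) (π : ℕ → ℕ),
    D ⊆ Finset.range n ∧ D' ⊆ Finset.range n ∧ D.card = k ∧
    Set.BijOn π ↑D ↑D' ∧ StrictMonoOn π ↑D ∧
    ∀ i ∈ D, dist (T^[i] x) (T^[π i] y) < δ

/-- The discrete `(n,δ)`-gap `f̄_{n,δ}(x,y)`. -/
noncomputable def dGap (T : X → X) (n : ℕ) (δ : ℝ) (x y : X) : ℝ :=
  1 - ((sSup {k : ℕ | DMatching T x y n δ k} : ℕ) : ℝ) / n

/-- `f̄_δ(x,y) = limsup_{n → ∞} f̄_{n,δ}(x,y)`. -/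
noncomputable def dFKdist (T : X → X) (δ : ℝ) (x y : X) : ℝ :=
  Filter.limsup (fun n : ℕ => dGap T n δ x y) Filter.atTop

/-- The discrete Feldman–Katok pseudometric. -/
noncomputable def dRhoFK (T : X → X) (x y : X) : ℝ :=
  sInf {δ : ℝ | 0 < δ ∧ dFKdist T δ x y ≤ δ}

variable [MeasurableSpace X] [BorelSpace X]

/-- The `t`-empirical measure `μ_{x,t} = (1/t) ∫_0^t δ_{φ^s x} ds`. -/
noncomputable def empMeasure (Φ : ℝ → X → X) (x : X) (t : ℝ) : Measure X :=
  (ENNReal.ofReal (1 / t)) • Measure.map (fun s => Φ s x) (volume.restrict (Icc 0 t))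

/-- `x` is generic for `μ`: empirical measures converge to `μ` in the weak* topology. -/
def Generic (Φ : ℝ → X → X) (μ : Measure X) (x : X) : Prop :=
  ∀ f : C(X, ℝ), Tendsto (fun t => ∫ z, f z ∂(empMeasure Φ x t)) atTop (𝓝 (∫ z, f z ∂μ))

def FlowInvariant (Φ : ℝ → X → X) (μ : Measure X) : Prop :=
  ∀ t : ℝ, MeasurePreserving (Φ t) μ μ

def FlowErgodic (Φ : ℝ → X → X) (μ : Measure X) : Prop :=
  FlowInvariant Φ μ ∧
    ∀ A : Set X, MeasurableSet A → (∀ t, Φ t ⁻¹' A = A) → μ A = 0 ∨ μ A = 1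

/-- The Prokhorov metric. -/
noncomputable def prokhorov (μ ν : Measure X) : ℝ :=
  sInf {ε : ℝ | 0 < ε ∧ ∀ B : Set X, MeasurableSet B →
    μ B ≤ ν (Metric.thickening ε B) + ENNReal.ofReal ε}

/-- A finite Borel partition of `X`, indexed by `ℕ` with all but finitely many cells empty. -/
structure BPartition (X : Type*) [MeasurableSpace X] where
  cells : ℕ → Set X
  measurable : ∀ j, MeasurableSet (cells j)
  disj : Pairwise (Function.onFun Disjoint cells)
  cover : ⋃ j, cells j = Set.univ
  finite : ∃ n, ∀ j, n ≤ j → cells j = ∅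

/-- The partition pseudometric `d_μ(P,Q)` (infimum over orderings of
`μ {x : P(x) ≠ Q(x)}`). -/
noncomputable def dPart (μ : Measure X) (P Q : ℕ → Set X) : ℝ :=
  ⨅ σ : Equiv.Perm ℕ, (μ (⋃ j, P j \ Q (σ j))).toReal

/-- `(t,ε,P)`-matchability with respect to a partition `P` (Ratner). -/
def PMatchable (Φ : ℝ → X → X) (P : ℕ → Set X) (x y : X) (t ε : ℝ) : Prop :=
  ∃ (A A' : Set ℝ) (h h' : ℝ → ℝ),
    MeasurableSet A ∧ MeasurableSet A' ∧
    A ⊆ Icc 0 t ∧ A' ⊆ Icc 0 t ∧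
    ENNReal.ofReal ((1 - ε) * t) < volume A ∧
    ENNReal.ofReal ((1 - ε) * t) < volume A' ∧
    MapsTo h A A' ∧ SurjOn h A A' ∧ StrictMonoOn h A ∧
    (∀ B ⊆ A, MeasurableSet B → volume (h '' B) = ENNReal.ofReal (∫ s in B, h' s)) ∧
    (∀ s ∈ A, |h' s - 1| < ε) ∧
    (∀ s ∈ A, ∀ j, Φ s x ∈ P j ↔ Φ (h s) y ∈ P j)

/-- `f_t(x,y,P)`. -/
noncomputable def fPart (Φ : ℝ → X → X) (P : ℕ → Set X) (t : ℝ) (x y : X) : ℝ :=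
  sInf ({ε : ℝ | 0 < ε ∧ PMatchable Φ P x y t ε} ∪ {1})

/-- The `(t,P)`-ball of radius `ε` centered at `x`. -/
def PBall (Φ : ℝ → X → X) (P : ℕ → Set X) (t ε : ℝ) (x : X) : Set X :=
  {y | fPart Φ P t x y < ε}

/-- `K_t(ε,P)`: minimal cardinality of an `(ε,t,P)`-cover (`⊤` if none exists). -/
noncomputable def Kt (μ : Measure X) (Φ : ℝ → X → X) (P : ℕ → Set X) (ε t : ℝ) : ℝ≥0∞ :=
  sInf ((fun C : Finset X => (C.card : ℝ≥0∞)) ''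
    {C : Finset X | ENNReal.ofReal (1 - ε) < μ (⋃ x ∈ C, PBall Φ P t ε x)})

/-- `β(u,ε,P) = liminf_{t→∞} log K_t(ε,P) / u(t)`. -/
noncomputable def betaU (μ : Measure X) (Φ : ℝ → X → X) (P : ℕ → Set X) (u : ℝ → ℝ)
    (ε : ℝ) : EReal :=
  Filter.liminf (fun t => ENNReal.log (Kt μ Φ P ε t) / (ENNReal.ofReal (u t) : EReal))
    Filter.atTop

/-- `e(u,P) = limsup_{ε→0⁺} β(u,ε,P)`. -/
noncomputable def eUP (μ : Measure X) (Φ : ℝ → X → X) (P : ℕ → Set X) (u : ℝ → ℝ) : EReal :=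
  Filter.limsup (fun ε => betaU μ Φ P u ε) (𝓝[>] (0 : ℝ))

/-- `e(Φ,u) = sup_P e(u,P)`. -/
noncomputable def ePhi (μ : Measure X) (Φ : ℝ → X → X) (u : ℝ → ℝ) : EReal :=
  ⨆ P : BPartition X, eUP μ Φ P.cells u

end FK


/-!
A matching of the orbits of `x` and `y` over `[0, t]` is a time change `h : A → A'` whose
derivative is `ε`-close to `1`. Extending `h` monotonically, the push-forward of Lebesgue measure
on `A` is squeezed between `(1 - ε)` and `(1 + ε)` times Lebesgue measure on `A'`, so for a
continuous `f` the averages of `f` along the two orbits over `[0, t]` differ by at most the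
oscillation of `f` at scale `δ` plus `O(‖f‖ ε)`. Since `ρ̃_FK(x, y) = 0`, such matchings exist
for all large `t` with `δ` and `ε` as small as we like, so the empirical averages along `y` have
the same limit `∫ f dμ` as those along `x`.
-/

section Sandwich

variable {α : Type*} [MeasurableSpace α] {μ ν : Measure α} {ε : ℝ}

lemma abs_integral_sub_le_of_smul_le_of_le_smul_of_nonneg (hε : 0 ≤ ε) (hε1 : ε ≤ 1)
    (hlow : ENNReal.ofReal (1 - ε) • μ ≤ ν) (hup : ν ≤ ENNReal.ofReal (1 + ε) • μ)
    {g : α → ℝ} (hg0 : ∀ a, 0 ≤ g a) (hg : Integrable g μ) :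
    |(∫ a, g a ∂ν) - ∫ a, g a ∂μ| ≤ ε * ∫ a, g a ∂μ := by
  have hle := integral_mono_measure hup (.of_forall hg0) (hg.smul_measure ENNReal.ofReal_ne_top)
  have hge := integral_mono_measure hlow (.of_forall hg0)
    ((hg.smul_measure ENNReal.ofReal_ne_top).mono_measure hup)
  rw [integral_smul_measure, ENNReal.toReal_ofReal (by linarith), smul_eq_mul] at hle hge
  rw [abs_le]
  constructor <;> linarith

lemma abs_integral_sub_le_of_smul_le_of_le_smul (hε : 0 ≤ ε) (hε1 : ε ≤ 1)
    (hlow : ENNReal.ofReal (1 - ε) • μ ≤ ν) (hup : ν ≤ ENNReal.ofReal (1 + ε) • μ)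
    {g : α → ℝ} (hg : Integrable g μ) :
    |(∫ a, g a ∂ν) - ∫ a, g a ∂μ| ≤ ε * ∫ a, |g a| ∂μ := by
  have hgν : Integrable g ν := (hg.smul_measure ENNReal.ofReal_ne_top).mono_measure hup
  have hpos := abs_integral_sub_le_of_smul_le_of_le_smul_of_nonneg hε hε1 hlow hup
    (fun a => le_max_right (g a) 0) hg.pos_part
  have hneg := abs_integral_sub_le_of_smul_le_of_le_smul_of_nonneg hε hε1 hlow hup
    (fun a => le_max_right (-g a) 0) hg.neg_part
  have hsplit : ∀ ρ : Measure α, Integrable g ρ →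
      ∫ a, g a ∂ρ = ∫ a, max (g a) 0 ∂ρ - ∫ a, max (-g a) 0 ∂ρ := fun ρ hρ => by
    rw [← integral_sub hρ.pos_part hρ.neg_part]
    simp only [max_zero_sub_max_neg_zero_eq_self]
  have habs : ∫ a, |g a| ∂μ = ∫ a, max (g a) 0 ∂μ + ∫ a, max (-g a) 0 ∂μ := by
    rw [← integral_add hg.pos_part hg.neg_part]
    simp only [max_zero_add_max_neg_zero_eq_abs_self]
  rw [hsplit ν hgν, hsplit μ hg, habs, mul_add]
  calc _ = |(∫ a, max (g a) 0 ∂ν - ∫ a, max (g a) 0 ∂μ)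
        - (∫ a, max (-g a) 0 ∂ν - ∫ a, max (-g a) 0 ∂μ)| := by ring_nf
    _ ≤ _ := (abs_sub _ _).trans (add_le_add hpos hneg)

lemma smul_map_le_restrict_image_le_smul_map {β : Type*} [MeasurableSpace β] {ν : Measure β}
    {A : Set α} {h H : α → β} {c₁ c₂ : ℝ≥0∞} (hA : MeasurableSet A) (hH : Measurable H)
    (hhH : EqOn h H A)
    (hbound : ∀ B ⊆ A, MeasurableSet B → ν (h '' B) ∈ Icc (c₁ * μ B) (c₂ * μ B)) :
    c₁ • (μ.restrict A).map H ≤ ν.restrict (h '' A) ∧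
      ν.restrict (h '' A) ≤ c₂ • (μ.restrict A).map H := by
  have hmap : ∀ B', MeasurableSet B' → (μ.restrict A).map H B' = μ (H ⁻¹' B' ∩ A) :=
    fun B' hB' => by rw [Measure.map_apply hH hB', Measure.restrict_apply (hH hB')]
  have hrestr : ∀ B', MeasurableSet B' → ν.restrict (h '' A) B' = ν (h '' (H ⁻¹' B' ∩ A)) :=
    fun B' hB' => by
      rw [Measure.restrict_apply hB', (hhH.mono inter_subset_right).image_eq,
        image_preimage_inter, hhH.image_eq]
  refine ⟨Measure.le_iff.2 fun B' hB' => ?_, Measure.le_iff.2 fun B' hB' => ?_⟩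
  · rw [Measure.smul_apply, smul_eq_mul, hmap B' hB', hrestr B' hB']
    exact (hbound _ inter_subset_right ((hH hB').inter hA)).1
  · rw [Measure.smul_apply, smul_eq_mul, hmap B' hB', hrestr B' hB']
    exact (hbound _ inter_subset_right ((hH hB').inter hA)).2

end Sandwich

lemma measure_image_mem_Icc_of_abs_sub_one_lt {α β : Type*} [MeasurableSpace α]
    [MeasurableSpace β] {μ : Measure α} {ν : Measure β} {A : Set α} {h : α → β} {h' : α → ℝ}
    {ε : ℝ} (hA : MeasurableSet A) (hAfin : μ A ≠ ∞) (himage : ν (h '' A) ≠ 0)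
    (hderiv : ∀ B ⊆ A, MeasurableSet B → ν (h '' B) = ENNReal.ofReal (∫ s in B, h' s ∂μ))
    (hd1 : ∀ s ∈ A, |h' s - 1| < ε) {B : Set α} (hBA : B ⊆ A) (hB : MeasurableSet B) :
    ν (h '' B) ∈ Icc (ENNReal.ofReal (1 - ε) * μ B) (ENNReal.ofReal (1 + ε) * μ B) := by
  -- `h'` is not assumed measurable; integrability comes from `ν (h '' A) ≠ 0`.
  have hint : IntegrableOn h' A μ := by
    by_contra hni
    exact himage (by rw [hderiv A subset_rfl hA, integral_undef hni, ENNReal.ofReal_zero])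
  have hBfin : μ B ≠ ∞ := ne_top_of_le_ne_top hAfin (measure_mono hBA)
  have hconst (c : ℝ) : IntegrableOn (fun _ => c) B μ := integrableOn_const hBfin
  have hlow : ∫ _ in B, (1 - ε) ∂μ ≤ ∫ s in B, h' s ∂μ :=
    setIntegral_mono_on (hconst _) (hint.mono_set hBA) hB fun s hs => by
      linarith [(abs_lt.1 (hd1 s (hBA hs))).1]
  have hup : ∫ s in B, h' s ∂μ ≤ ∫ _ in B, (1 + ε) ∂μ :=
    setIntegral_mono_on (hint.mono_set hBA) (hconst _) hB fun s hs => by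
      linarith [(abs_lt.1 (hd1 s (hBA hs))).2]
  rw [setIntegral_const, smul_eq_mul, measureReal_def] at hlow hup
  rw [hderiv B hBA hB, ← ENNReal.ofReal_toReal hBfin, ← ENNReal.ofReal_mul' ENNReal.toReal_nonneg,
    ← ENNReal.ofReal_mul' ENNReal.toReal_nonneg]
  exact ⟨ENNReal.ofReal_le_ofReal (by linarith), ENNReal.ofReal_le_ofReal (by linarith)⟩

lemma abs_setIntegral_image_sub_setIntegral_le {μ ν : Measure ℝ} {A : Set ℝ}
    {h h' F G : ℝ → ℝ} {ε η M : ℝ} (hε : 0 ≤ ε) (hε1 : ε ≤ 1) (hA : MeasurableSet A)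
    (hAfin : μ A ≠ ∞) (hmono : MonotoneOn h A) (hbdd : BddBelow (h '' A))
    (hbdd' : BddAbove (h '' A)) (himage : ν (h '' A) ≠ 0)
    (hderiv : ∀ B ⊆ A, MeasurableSet B → ν (h '' B) = ENNReal.ofReal (∫ s in B, h' s ∂μ))
    (hd1 : ∀ s ∈ A, |h' s - 1| < ε) (hF : Measurable F) (hFM : ∀ u, |F u| ≤ M)
    (hG : IntegrableOn G A μ) (hFG : ∀ s ∈ A, |F (h s) - G s| ≤ η) :
    |(∫ u in h '' A, F u ∂ν) - ∫ s in A, G s ∂μ| ≤ (ε * M + η) * μ.real A := by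
  obtain ⟨H, hHmono, hhH⟩ := hmono.exists_monotone_extension hbdd hbdd'
  have hH : Measurable H := hHmono.measurable
  obtain ⟨hlow, hup⟩ := smul_map_le_restrict_image_le_smul_map hA hH hhH fun B hBA hB =>
    measure_image_mem_Icc_of_abs_sub_one_lt hA hAfin himage hderiv hd1 hBA hB
  have : IsFiniteMeasure (μ.restrict A) := isFiniteMeasure_restrict.2 hAfin
  have hFint : Integrable F ((μ.restrict A).map H) :=
    (integrable_const M).mono' hF.aestronglyMeasurable (.of_forall hFM)
  have hchange := abs_integral_sub_le_of_smul_le_of_le_smul hε hε1 hlow hup hFint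
  rw [integral_map hH.aemeasurable hF.aestronglyMeasurable,
    integral_map (f := fun u => |F u|) hH.aemeasurable
      (continuous_abs.measurable.comp hF).aestronglyMeasurable] at hchange
  have habs : ∫ s in A, |F (H s)| ∂μ ≤ M * μ.real A := (le_abs_self _).trans <| by
    simpa using norm_setIntegral_le_of_norm_le_const (f := fun s => |F (H s)|) hAfin.lt_top
      fun s _ => by simpa using hFM (H s)
  have hmatch : |(∫ s in A, F (H s) ∂μ) - ∫ s in A, G s ∂μ| ≤ η * μ.real A := by
    have hFH : IntegrableOn (fun s => F (H s)) A μ :=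
      (integrable_const M).mono' (hF.comp hH).aestronglyMeasurable (.of_forall fun s => hFM _)
    rw [← integral_sub hFH hG, ← Real.norm_eq_abs]
    refine norm_setIntegral_le_of_norm_le_const hAfin.lt_top fun s hs => ?_
    simpa [← hhH hs] using hFG s hs
  calc _ ≤ |(∫ u in h '' A, F u ∂ν) - ∫ s in A, F (H s) ∂μ|
        + |(∫ s in A, F (H s) ∂μ) - ∫ s in A, G s ∂μ| := abs_sub_le _ _ _
    _ ≤ ε * (M * μ.real A) + η * μ.real A := add_le_add (hchange.trans (by gcongr)) hmatch
    _ = (ε * M + η) * μ.real A := by ring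

lemma lt_measureReal_of_ofReal_lt {α : Type*} [MeasurableSpace α] {μ : Measure α} {s : Set α}
    {a : ℝ} (hs : μ s ≠ ∞) (h : ENNReal.ofReal a < μ s) : a < μ.real s :=
  (le_max_left a 0).trans_lt (ENNReal.toReal_strict_mono hs h)

lemma abs_integral_Icc_sub_setIntegral_le {F : ℝ → ℝ} {B : Set ℝ} {M ε t : ℝ}
    (hF : IntegrableOn F (Icc 0 t)) (hFM : ∀ s, |F s| ≤ M) (hB : MeasurableSet B)
    (hBt : B ⊆ Icc 0 t) (hvol : ENNReal.ofReal ((1 - ε) * t) < volume B) :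
    |(∫ s in Icc 0 t, F s) - ∫ s in B, F s| ≤ M * (ε * t) := by
  have hM : 0 ≤ M := (abs_nonneg _).trans (hFM 0)
  have ht : 0 ≤ t := by
    obtain ⟨s, hs⟩ := nonempty_of_measure_ne_zero (pos_of_gt hvol).ne'
    exact (hBt hs).1.trans (hBt hs).2
  have hIcc : volume (Icc 0 t) ≠ ∞ := measure_Icc_lt_top.ne
  have hBvol := lt_measureReal_of_ofReal_lt (measure_ne_top_of_subset hBt hIcc) hvol
  rw [← setIntegral_sdiff hB hF hBt, ← Real.norm_eq_abs]
  refine (norm_setIntegral_le_of_norm_le_const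
    ((measure_mono sdiff_subset).trans_lt measure_Icc_lt_top) fun s _ => hFM s).trans ?_
  rw [measureReal_sdiff hBt hB hIcc, Real.volume_real_Icc_of_le ht]
  gcongr
  linarith

section Flow

variable {X : Type*} [MetricSpace X] {Φ : ℝ → X → X}

lemma Matchable.abs_integral_sub_le (hΦ : Continuous fun p : ℝ × X => Φ p.1 p.2)
    {f : X → ℝ} (hf : Continuous f) {x y : X} {t ε δ M η : ℝ} (hε : 0 ≤ ε) (hε1 : ε ≤ 1)
    (hM : ∀ z, |f z| ≤ M) (hmod : ∀ a b, dist a b < δ → |f a - f b| ≤ η)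
    (hm : Matchable Φ x y t ε δ) :
    |(∫ s in Icc 0 t, f (Φ s y)) - ∫ s in Icc 0 t, f (Φ s x)| ≤ t * (η + 3 * M * ε) := by
  obtain ⟨A, A', h, h', hA, hA', hAt, hA't, hvolA, hvolA', hmaps, hsurj, hmono, hderiv, hd1,
    hdist⟩ := hm
  have horbit (z : X) : Continuous fun s : ℝ => f (Φ s z) :=
    hf.comp (hΦ.comp (continuous_id.prodMk continuous_const))
  have hFG : ∀ s ∈ A, |f (Φ (h s) y) - f (Φ s x)| ≤ η := fun s hs => by
    rw [abs_sub_comm]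
    exact hmod _ _ (hdist s hs)
  obtain ⟨s₀, hs₀⟩ := nonempty_of_measure_ne_zero (pos_of_gt hvolA).ne'
  have ht : 0 ≤ t := (hAt hs₀).1.trans (hAt hs₀).2
  have hη : 0 ≤ η := (abs_nonneg _).trans (hFG s₀ hs₀)
  have hM0 : 0 ≤ M := (abs_nonneg _).trans (hM x)
  have hhA : h '' A = A' := hsurj.image_eq_of_mapsTo hmaps
  have hIcc : volume (Icc 0 t) ≠ ∞ := measure_Icc_lt_top.ne
  have hAvol : volume.real A ≤ t :=
    (measureReal_mono hAt hIcc).trans_eq (by rw [Real.volume_real_Icc_of_le ht, sub_zero])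
  have hy := abs_integral_Icc_sub_setIntegral_le (horbit y).integrableOn_Icc (fun _ => hM _)
    hA' hA't hvolA'
  have hx := abs_integral_Icc_sub_setIntegral_le (horbit x).integrableOn_Icc (fun _ => hM _)
    hA hAt hvolA
  have hmid := abs_setIntegral_image_sub_setIntegral_le hε hε1 hA
    (measure_ne_top_of_subset hAt hIcc) hmono.monotoneOn
    (hhA ▸ bddBelow_Icc.mono hA't) (hhA ▸ bddAbove_Icc.mono hA't)
    (hhA ▸ (pos_of_gt hvolA').ne') hderiv hd1 (horbit y).measurable (fun _ => hM _)
    ((horbit x).integrableOn_Icc.mono_set hAt) hFG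
  rw [hhA] at hmid
  have hmid' : (ε * M + η) * volume.real A ≤ (ε * M + η) * t := by gcongr
  rw [abs_sub_comm] at hx
  have h₁ := abs_sub_le (∫ s in Icc 0 t, f (Φ s y)) (∫ s in A', f (Φ s y))
    (∫ s in Icc 0 t, f (Φ s x))
  have h₂ := abs_sub_le (∫ s in A', f (Φ s y)) (∫ s in A, f (Φ s x))
    (∫ s in Icc 0 t, f (Φ s x))
  linarith

end Flow

section FeldmanKatok

variable {X : Type*} [MetricSpace X] {Φ : ℝ → X → X} {x y : X}

lemma fkGap_nonneg (t δ : ℝ) : 0 ≤ fkGap Φ t δ x y :=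
  Real.sInf_nonneg fun _ hε => hε.elim (fun hε => hε.1.le) fun hε => hε ▸ zero_le_one

lemma fkGap_le_one (t δ : ℝ) : fkGap Φ t δ x y ≤ 1 :=
  csInf_le ⟨0, fun _ hε => hε.elim (fun hε => hε.1.le) fun hε => hε ▸ zero_le_one⟩
    (mem_union_right _ rfl)

lemma fkDist_le_one (δ : ℝ) : fkDist Φ δ x y ≤ 1 :=
  limsup_le_of_le (isBoundedUnder_of ⟨0, fun t => fkGap_nonneg t δ⟩).isCoboundedUnder_le
    (.of_forall fun t => fkGap_le_one t δ)

lemma exists_matchable_of_fkGap_lt {t δ c : ℝ} (hgap : fkGap Φ t δ x y < c) (hc : c ≤ 1) :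
    ∃ ε, 0 < ε ∧ ε < c ∧ Matchable Φ x y t ε δ := by
  unfold fkGap at hgap
  obtain ⟨ε, hε | hε, hεc⟩ := exists_lt_of_csInf_lt ⟨1, mem_union_right _ (mem_singleton 1)⟩ hgap
  · exact ⟨ε, hε.1, hεc, hε.2⟩
  · exact absurd (hε ▸ hεc) hc.not_gt

lemma exists_eventually_matchable_of_rhoFK_eq_zero (h : rhoFK Φ x y = 0) {c : ℝ} (hc : 0 < c)
    (hc1 : c ≤ 1) :
    ∃ δ, 0 < δ ∧ δ < c ∧ ∀ᶠ t in atTop, ∃ ε, 0 < ε ∧ ε < δ ∧ Matchable Φ x y t ε δ := by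
  -- Without this, `rhoFK Φ x y = 0` could just be the junk value `sInf ∅ = 0`.
  have hne : {δ : ℝ | 0 < δ ∧ fkDist Φ δ x y < δ}.Nonempty :=
    ⟨2, two_pos, (fkDist_le_one 2).trans_lt one_lt_two⟩
  obtain ⟨δ, ⟨hδ, hδdist⟩, hδc⟩ := exists_lt_of_csInf_lt hne (h.symm ▸ hc : rhoFK Φ x y < c)
  refine ⟨δ, hδ, hδc, ?_⟩
  filter_upwards [eventually_lt_of_limsup_lt hδdist
    (isBoundedUnder_of ⟨1, fun t => fkGap_le_one t δ⟩)] with t ht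
  exact exists_matchable_of_fkGap_lt ht (hδc.le.trans hc1)

variable [MeasurableSpace X]

omit [MetricSpace X] in
lemma integral_empMeasure {f : X → ℝ} (hf : Measurable f) (horbit : Measurable fun s => Φ s x)
    {t : ℝ} (ht : 0 ≤ t) :
    ∫ z, f z ∂empMeasure Φ x t = t⁻¹ * ∫ s in Icc 0 t, f (Φ s x) := by
  rw [empMeasure, integral_smul_measure, integral_map horbit.aemeasurable
    hf.aestronglyMeasurable, ENNReal.toReal_ofReal (by positivity), smul_eq_mul, one_div]

lemma tendsto_integral_empMeasure_sub_of_rhoFK_eq_zero [BorelSpace X] [CompactSpace X]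
    (hΦ : Continuous fun p : ℝ × X => Φ p.1 p.2) (h : rhoFK Φ x y = 0) (f : C(X, ℝ)) :
    Tendsto (fun t => (∫ z, f z ∂empMeasure Φ y t) - ∫ z, f z ∂empMeasure Φ x t) atTop (𝓝 0) := by
  rw [Metric.tendsto_nhds]
  intro η hη
  have hM (z : X) : |f z| ≤ ‖f‖ := by simpa using f.norm_coe_le_norm z
  obtain ⟨δ₀, hδ₀, hmod⟩ := Metric.uniformContinuous_iff.1
    (CompactSpace.uniformContinuous_of_continuous f.continuous) (η / 4) (by positivity)
  obtain ⟨δ, -, hδc, hev⟩ := exists_eventually_matchable_of_rhoFK_eq_zero h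
    (c := min (min δ₀ 1) (η / (6 * ‖f‖ + 1))) (by positivity)
    ((min_le_left _ _).trans (min_le_right _ _))
  have hδδ₀ : δ < δ₀ := hδc.trans_le ((min_le_left _ _).trans (min_le_left _ _))
  have hδ1 : δ ≤ 1 := hδc.le.trans ((min_le_left _ _).trans (min_le_right _ _))
  have hMδ : 3 * ‖f‖ * δ ≤ η / 2 := by
    have := hδc.le.trans (min_le_right _ _)
    rw [le_div_iff₀ (by positivity)] at this
    nlinarith [norm_nonneg f]
  have horbit (z : X) : Continuous fun s : ℝ => Φ s z :=
    hΦ.comp (continuous_id.prodMk continuous_const)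
  filter_upwards [hev, eventually_gt_atTop 0] with t ⟨ε, hε, hεδ, hm⟩ ht
  have hest := hm.abs_integral_sub_le hΦ f.continuous hε.le (hεδ.le.trans hδ1) hM
    fun a b hab => (hmod (hab.trans hδδ₀)).le
  have hMε : 3 * ‖f‖ * ε ≤ η / 2 := hMδ.trans' (by gcongr)
  rw [Real.dist_eq, sub_zero, integral_empMeasure f.continuous.measurable (horbit y).measurable
    ht.le, integral_empMeasure f.continuous.measurable (horbit x).measurable ht.le, ← mul_sub,
    abs_mul, abs_inv, abs_of_pos ht, inv_mul_lt_iff₀ ht]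
  nlinarith

end FeldmanKatok

theorem stmt4_general {X : Type*} [MetricSpace X] [CompactSpace X] [MeasurableSpace X] [BorelSpace X] (Φ : ℝ → X → X) (hΦ : IsFlow Φ)
    (μ : Measure X)
    (x y : X) (hx : Generic Φ μ x) (h : rhoFK Φ x y = 0) :
    Generic Φ μ y := by
  intro f
  simpa using (hx f).add (tendsto_integral_empMeasure_sub_of_rhoFK_eq_zero hΦ.cont h f)

theorem stmt4 {X : Type*} [MetricSpace X] [CompactSpace X] [MeasurableSpace X] [BorelSpace X] (Φ : ℝ → X → X) (hΦ : IsFlow Φ)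
    (μ : Measure X) [IsProbabilityMeasure μ] (hμ : FlowErgodic Φ μ)
    (x y : X) (hx : Generic Φ μ x) (h : rhoFK Φ x y = 0) :
    Generic Φ μ y :=
  stmt4_general Φ hΦ μ x y hx h
end

section
/- Let T be a homeomorphism of a compact metric space X with f̄_{n,δ}(x,y) ≤ δ for all n ≥ n_0 (for some δ < ε/2 chosen so that δ-closeness of points implies ε-closeness of their flow images for times in [0,1]). Then for every t ≥ t_0 (with t_0 > n_0 and t_0·ε/4 > 1), the points x and y are (t,ε,ε)-matchable under the flow: there is a piecewise-isometric translation h: A → A' on a union of unit intervals A ⊆ [0,t] with λ(A) > (1-ε)t witnessing f̃_{t,ε}(x,y) ≤ ε. -/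
open MeasureTheory Filter Set Topology
open scoped ENNReal symmDiff

/-! Thicken a discrete matching `π` of `{0, …, n-1}` for the time-one map, `n = ⌊t⌋₊`, to a
continuous one by translating each matched `[k, k+1)` onto `[π k, π k + 1)`. Translations preserve
Lebesgue measure and have derivative `1`; since `φ^s x = φ^(s-k) (φ^k x)`, the choice of `δ`
upgrades `δ`-closeness of `φ^k x` and `φ^(π k) y` to `ε`-closeness on all of `[k, k+1)`.
The matched length is at least `(1 - δ) ⌊t⌋₊ > (1 - δ) t - 1`, which exceeds `(1 - ε) t` because
`(ε - δ) t > ε t / 2 > 2`. -/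

section UnitIntervals

def unitIntervals (D : Finset ℕ) : Set ℝ := ⋃ k ∈ D, Ico (k : ℝ) (k + 1)

variable {D : Finset ℕ} {π : ℕ → ℕ} {k : ℕ} {s : ℝ}

theorem mem_unitIntervals : s ∈ unitIntervals D ↔ ∃ k ∈ D, s ∈ Ico (k : ℝ) (k + 1) := by
  simp only [unitIntervals, mem_iUnion₂, exists_prop]

theorem pairwise_disjoint_Ico_natCast :
    Pairwise (Function.onFun Disjoint fun k : ℕ => Ico (k : ℝ) (k + 1)) := fun a b hab =>
  disjoint_left.2 fun s ha hb =>
    hab <| (Nat.floor_eq_on_Ico a s ha).symm.trans (Nat.floor_eq_on_Ico b s hb)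

theorem measurableSet_unitIntervals (D : Finset ℕ) : MeasurableSet (unitIntervals D) :=
  D.measurableSet_biUnion fun _ _ => measurableSet_Ico

theorem volume_unitIntervals (D : Finset ℕ) : volume (unitIntervals D) = D.card := by
  rw [unitIntervals, measure_biUnion_finset (pairwise_disjoint_Ico_natCast.set_pairwise _)
    fun _ _ => measurableSet_Ico]
  simp [Real.volume_Ico]

theorem unitIntervals_subset_Icc {n : ℕ} (hD : D ⊆ Finset.range n) :
    unitIntervals D ⊆ Icc 0 n := by
  intro s hs
  obtain ⟨k, hk, hks⟩ := mem_unitIntervals.1 hs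
  have : (k : ℝ) + 1 ≤ n := by exact_mod_cast Finset.mem_range.1 (hD hk)
  exact ⟨(Nat.cast_nonneg k).trans hks.1, by linarith [hks.2]⟩

noncomputable def unitShift (π : ℕ → ℕ) (s : ℝ) : ℝ := s - ⌊s⌋₊ + π ⌊s⌋₊

theorem unitShift_eq_add (hs : s ∈ Ico (k : ℝ) (k + 1)) : unitShift π s = s + (π k - k) := by
  rw [unitShift, Nat.floor_eq_on_Ico k s hs]
  ring

theorem unitShift_mem_Ico (hs : s ∈ Ico (k : ℝ) (k + 1)) :
    unitShift π s ∈ Ico (π k : ℝ) (π k + 1) := by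
  rw [unitShift_eq_add hs]
  constructor <;> linarith [hs.1, hs.2]

theorem mapsTo_unitShift :
    MapsTo (unitShift π) (unitIntervals D) (unitIntervals (D.image π)) := by
  intro s hs
  obtain ⟨k, hk, hks⟩ := mem_unitIntervals.1 hs
  exact mem_unitIntervals.2 ⟨π k, Finset.mem_image_of_mem π hk, unitShift_mem_Ico hks⟩

theorem surjOn_unitShift :
    SurjOn (unitShift π) (unitIntervals D) (unitIntervals (D.image π)) := by
  intro u hu
  obtain ⟨_, hj, hju⟩ := mem_unitIntervals.1 hu
  obtain ⟨k, hk, rfl⟩ := Finset.mem_image.1 hj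
  have hs : u - (π k - k) ∈ Ico (k : ℝ) (k + 1) := ⟨by linarith [hju.1], by linarith [hju.2]⟩
  exact ⟨_, mem_unitIntervals.2 ⟨k, hk, hs⟩, by rw [unitShift_eq_add hs]; ring⟩

theorem strictMonoOn_unitShift (hπ : StrictMonoOn π D) :
    StrictMonoOn (unitShift π) (unitIntervals D) := by
  intro s hs s' hs' hss'
  obtain ⟨k, hk, hks⟩ := mem_unitIntervals.1 hs
  obtain ⟨k', hk', hks'⟩ := mem_unitIntervals.1 hs'
  have hkk' : k ≤ k' := by
    rw [← Nat.floor_eq_on_Ico k s hks, ← Nat.floor_eq_on_Ico k' s' hks']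
    exact Nat.floor_le_floor hss'.le
  rcases hkk'.eq_or_lt with rfl | hlt
  · rw [unitShift_eq_add hks, unitShift_eq_add hks']
    linarith
  · have : (π k : ℝ) + 1 ≤ π k' := by exact_mod_cast hπ hk hk' hlt
    linarith [(unitShift_mem_Ico (π := π) hks).2, (unitShift_mem_Ico (π := π) hks').1]

theorem volume_image_unitShift (hπ : InjOn π D) {B : Set ℝ} (hB : B ⊆ unitIntervals D)
    (hBm : MeasurableSet B) : volume (unitShift π '' B) = volume B := by
  set piece : ℕ → Set ℝ := fun k => B ∩ Ico (k : ℝ) (k + 1)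
  have hB_eq : B = ⋃ k ∈ D, piece k := by
    rw [← inter_iUnion₂]
    exact (inter_eq_left.2 hB).symm
  have hpiece_image : ∀ k, unitShift π '' piece k = (· + (π k - k : ℝ)) '' piece k :=
    fun k => image_congr fun s hs => unitShift_eq_add hs.2
  have hpiece_meas : ∀ k, MeasurableSet (piece k) := fun k => hBm.inter measurableSet_Ico
  have hdisj_image : PairwiseDisjoint ↑D fun k => unitShift π '' piece k := by
    intro a ha b hb hab
    exact (pairwise_disjoint_Ico_natCast (hπ.ne ha hb hab)).mono
      (MapsTo.image_subset fun _ hs => unitShift_mem_Ico hs.2)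
      (MapsTo.image_subset fun _ hs => unitShift_mem_Ico hs.2)
  calc volume (unitShift π '' B) = volume (⋃ k ∈ D, unitShift π '' piece k) := by
        rw [← image_iUnion₂, ← hB_eq]
    _ = ∑ k ∈ D, volume (unitShift π '' piece k) := by
        refine measure_biUnion_finset hdisj_image fun k _ => ?_
        rw [hpiece_image, image_add_right]
        exact (hpiece_meas k).preimage (measurable_add_const _)
    _ = ∑ k ∈ D, volume (piece k) := by
        refine Finset.sum_congr rfl fun k _ => ?_
        rw [hpiece_image, image_add_right, measure_preimage_add_right]
    _ = volume B := by
        rw [← measure_biUnion_finset (fun a _ b _ hab => (pairwise_disjoint_Ico_natCast hab).mono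
          inter_subset_right inter_subset_right) fun k _ => hpiece_meas k, ← hB_eq]

end UnitIntervals

section Matching

variable {X : Type*} [MetricSpace X]

theorem IsFlow.iterate_one {Φ : ℝ → X → X} (hΦ : IsFlow Φ) (k : ℕ) (z : X) :
    (Φ 1)^[k] z = Φ k z := by
  induction k with
  | zero => simp [hΦ.map_zero]
  | succ k ih => rw [Function.iterate_succ_apply', ih, Nat.cast_succ, hΦ.map_add]

variable {T : X → X} {x y : X} {n k : ℕ} {δ : ℝ}

theorem DMatching.le (h : DMatching T x y n δ k) : k ≤ n := by
  obtain ⟨D, -, -, hD, -, rfl, -⟩ := h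
  simpa using Finset.card_le_card hD

theorem dMatching_zero : DMatching T x y n δ 0 :=
  ⟨∅, ∅, id, by simp, by simp, rfl, by simp, by simp [StrictMonoOn], by simp⟩

theorem exists_dMatching_of_dGap_le (h : dGap T n δ x y ≤ δ) :
    ∃ k, DMatching T x y n δ k ∧ (1 - δ) * n ≤ k := by
  set K := sSup {k | DMatching T x y n δ k}
  refine ⟨K, Nat.sSup_mem ⟨0, dMatching_zero⟩ ⟨n, fun _ hk => DMatching.le hk⟩, ?_⟩
  rcases n.eq_zero_or_pos with rfl | hn
  · simp
  · have hn' : (0 : ℝ) < n := by exact_mod_cast hn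
    rwa [dGap, sub_le_comm, le_div_iff₀ hn'] at h

theorem matchable_of_dMatching {Φ : ℝ → X → X} (hΦ : IsFlow Φ) {ε η t : ℝ} (hε : 0 < ε)
    (hclose : ∀ w z : X, dist w z < δ → ∀ s ∈ Icc (0 : ℝ) 1, dist (Φ s w) (Φ s z) < η)
    (hm : DMatching (Φ 1) x y n δ k) (hnt : (n : ℝ) ≤ t)
    (hk : ENNReal.ofReal ((1 - ε) * t) < k) : Matchable Φ x y t ε η := by
  classical
  obtain ⟨D, D', π, hD, hD', rfl, hbij, hmono, hdist⟩ := hm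
  have hD'_eq : D.image π = D' := by
    rw [← Finset.coe_inj, Finset.coe_image, hbij.image_eq]
  have hsub : ∀ {E : Finset ℕ}, E ⊆ Finset.range n → unitIntervals E ⊆ Icc 0 t :=
    fun hE => (unitIntervals_subset_Icc hE).trans (Icc_subset_Icc_right hnt)
  refine ⟨unitIntervals D, unitIntervals (D.image π), unitShift π, fun _ => 1,
    measurableSet_unitIntervals _, measurableSet_unitIntervals _, hsub hD, hsub (hD'_eq ▸ hD'),
    ?_, ?_, mapsTo_unitShift, surjOn_unitShift, strictMonoOn_unitShift hmono, ?_,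
    fun _ _ => by simpa using hε, ?_⟩
  · rwa [volume_unitIntervals]
  · rwa [volume_unitIntervals, Finset.card_image_of_injOn hbij.injOn]
  · intro B hB hBm
    rw [volume_image_unitShift hbij.injOn hB hBm, setIntegral_const, smul_eq_mul, mul_one,
      measureReal_def, ENNReal.ofReal_toReal]
    exact ne_top_of_le_ne_top (by simp [volume_unitIntervals]) (measure_mono hB)
  · intro s hs
    obtain ⟨k, hk, hks⟩ := mem_unitIntervals.1 hs
    have hclose_k := hclose _ _ (by simpa only [hΦ.iterate_one] using hdist k hk) (s - k)
      ⟨by linarith [hks.1], by linarith [hks.2]⟩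
    rw [unitShift_eq_add hks]
    rwa [← hΦ.map_add, ← hΦ.map_add, add_sub_cancel,
      show (π k : ℝ) + (s - k) = s + (π k - k) by ring] at hclose_k

theorem fkGap_le_of_matchable {Φ : ℝ → X → X} {t ε : ℝ} (hε : 0 < ε)
    (h : Matchable Φ x y t ε δ) : fkGap Φ t δ x y ≤ ε :=
  csInf_le ⟨0, by rintro a (⟨ha, -⟩ | rfl) <;> positivity⟩ (Or.inl ⟨hε, h⟩)

end Matching

theorem stmt18_general {X : Type*} [MetricSpace X] (Φ : ℝ → X → X) (hΦ : IsFlow Φ) (x y : X)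
    (ε δ : ℝ) (hε : 0 < ε) (hε1 : ε < 1) (hδε : δ < ε / 2)
    (hflow : ∀ w z : X, dist w z < δ → ∀ s ∈ Set.Icc (0:ℝ) 1, dist (Φ s w) (Φ s z) < ε)
    (n₀ : ℕ) (hn₀ : ∀ n : ℕ, n₀ ≤ n → dGap (Φ 1) n δ x y ≤ δ)
    (t₀ : ℝ) (ht₀n : (n₀ : ℝ) < t₀) (ht₀ε : 1 < t₀ * ε / 4) :
    ∀ t : ℝ, t₀ ≤ t → Matchable Φ x y t ε ε ∧ fkGap Φ t ε x y ≤ ε := by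
  intro t ht
  have ht_pos : 0 < t := by nlinarith
  have hεt : 4 < ε * t := by nlinarith
  have hn₀t : n₀ ≤ ⌊t⌋₊ := Nat.le_floor (by linarith)
  obtain ⟨k, hm, hk⟩ := exists_dMatching_of_dGap_le (hn₀ _ hn₀t)
  have hk_gt : (1 - ε) * t < k := by nlinarith [Nat.lt_floor_add_one t]
  have hM := matchable_of_dMatching hΦ hε hflow hm (Nat.floor_le ht_pos.le)
    (by rw [← ENNReal.ofReal_natCast, ENNReal.ofReal_lt_ofReal_iff']; constructor <;> nlinarith)
  exact ⟨hM, fkGap_le_of_matchable hε hM⟩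

theorem stmt18 {X : Type*} [MetricSpace X] [CompactSpace X] (Φ : ℝ → X → X) (hΦ : IsFlow Φ) (x y : X)
    (ε δ : ℝ) (hε : 0 < ε) (hε1 : ε < 1) (hδ0 : 0 < δ) (hδε : δ < ε / 2)
    (hflow : ∀ w z : X, dist w z < δ → ∀ s ∈ Set.Icc (0:ℝ) 1, dist (Φ s w) (Φ s z) < ε)
    (n₀ : ℕ) (hn₀ : ∀ n : ℕ, n₀ ≤ n → dGap (Φ 1) n δ x y ≤ δ)
    (t₀ : ℝ) (ht₀n : (n₀ : ℝ) < t₀) (ht₀ε : 1 < t₀ * ε / 4) :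
    ∀ t : ℝ, t₀ ≤ t → Matchable Φ x y t ε ε ∧ fkGap Φ t ε x y ≤ ε :=
  stmt18_general Φ hΦ x y ε δ hε hε1 hδε hflow n₀ hn₀ t₀ ht₀n ht₀ε
end
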